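/- The coefficients of the minimal equation are projectively linearly identifiable in the following sense: if c_0, …, c_n, d ∈ ℂ[t] are polynomials with deg c_ι ≤ deg q_ι for every ι (with the convention that c_ι = 0 whenever q_ι = 0) and deg d ≤ deg p (d = 0 if p = 0), and if ∑_{ι=0}^{n} c_ι(t)·x^{(ι)}(t) = d(t) for all t ∈ ℝ, then there exists a constant λ ∈ ℂ such that c_ι = λ·q_ι for all ι and d = λ·p. -/

import Mathlib

/-!
Subtracting a suitable multiple `λ` of the minimal equation from the given one lowers the degree
of the top coefficient, giving a relation `(C', D')` with `deg C'ₙ < deg qₙ`. Eliminating the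
top derivative between `(q, p)` and `(C', D')` gives a relation of order `< n`, which must be
trivial by minimality; hence `qₙ C'_ι = C'ₙ q_ι` and `qₙ D' = C'ₙ p`. Since `q_ι, p` have no common
factor, `qₙ ∣ C'ₙ`, so `C'ₙ = 0` by degree, and then `C' = 0`, `D' = 0`.
-/

open Polynomial

theorem dvd_of_forall_mul_eq_mul {α ι : Type*} [CommMonoidWithZero α] [GCDMonoid α]
    {a b : α} {f g : ι → α} (ha : a ≠ 0) (hf : ∀ e, (∀ i, e ∣ f i) → IsUnit e)
    (h : ∀ i, a * g i = b * f i) : a ∣ b := by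
  obtain ⟨a', b', ha_eq, hb_eq, hunit⟩ := extract_gcd a b
  set e := gcd a b
  have he : e ≠ 0 := gcd_ne_zero_of_left ha
  have ha' : IsUnit a' := hf a' fun i =>
    (gcd_isUnit_iff_isRelPrime.mp hunit).dvd_of_dvd_mul_left
      ⟨g i, mul_left_cancel₀ he (by rw [← mul_assoc, ← mul_assoc, ← ha_eq, ← hb_eq, h i])⟩
  rw [ha_eq]
  exact ha'.mul_right_dvd.mpr (gcd_dvd_right a b)

namespace Polynomial

variable {K : Type*} [Field K]

theorem exists_degree_sub_C_mul_lt {c q : K[X]} (hq : q ≠ 0) (hc : c.degree ≤ q.degree) :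
    ∃ lam : K, (c - C lam * q).degree < q.degree := by
  rcases hc.lt_or_eq with hlt | hdeg
  · exact ⟨0, by simpa using hlt⟩
  have hc0 : c ≠ 0 := by
    rintro rfl
    exact hq (degree_eq_bot.mp hdeg.symm)
  refine ⟨c.leadingCoeff / q.leadingCoeff, hdeg ▸ degree_sub_lt_left ?_ hc0 ?_⟩
  · rw [hdeg, degree_C_mul (div_ne_zero (leadingCoeff_ne_zero.mpr hc0)
      (leadingCoeff_ne_zero.mpr hq))]
  · rw [leadingCoeff_mul, leadingCoeff_C, div_mul_cancel₀ _ (leadingCoeff_ne_zero.mpr hq)]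

theorem natDegree_pos_of_not_isUnit_of_dvd {e a : K[X]} (ha : a ≠ 0) (he : ¬IsUnit e)
    (hdvd : e ∣ a) : 0 < e.natDegree := by
  have he0 : e ≠ 0 := ne_zero_of_dvd_ne_zero ha hdvd
  refine Nat.pos_of_ne_zero fun h0 => he ?_
  rw [isUnit_iff_degree_eq_zero, degree_eq_natDegree he0, h0, Nat.cast_zero]

theorem eq_zero_of_forall_eval_ofReal_eq_zero {P : ℂ[X]} (h : ∀ t : ℝ, P.eval (t : ℂ) = 0) :
    P = 0 :=
  eq_zero_of_infinite_isRoot P <|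
    (Set.infinite_range_of_injective Complex.ofReal_injective).mono <| by
      rintro _ ⟨t, rfl⟩
      exact h t

end Polynomial

def IsPolynomialRelation (x : ℝ → ℂ) {m : ℕ} (s : Fin m → ℂ[X]) (r : ℂ[X]) : Prop :=
  ∀ t : ℝ, ∑ ι, (s ι).eval (t : ℂ) * iteratedDeriv (ι : ℕ) x t = r.eval (t : ℂ)

namespace IsPolynomialRelation

variable {x : ℝ → ℂ} {m : ℕ} {s s' : Fin m → ℂ[X]} {r r' : ℂ[X]}

theorem smul (h : IsPolynomialRelation x s r) (a : ℂ[X]) :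
    IsPolynomialRelation x (a • s) (a * r) := fun t => by
  simp only [Pi.smul_apply, smul_eq_mul, eval_mul, mul_assoc, ← Finset.mul_sum, h t]

theorem sub (h : IsPolynomialRelation x s r) (h' : IsPolynomialRelation x s' r') :
    IsPolynomialRelation x (s - s') (r - r') := fun t => by
  simp only [Pi.sub_apply, eval_sub, sub_mul, Finset.sum_sub_distrib, h t, h' t]

theorem init {s : Fin (m + 1) → ℂ[X]} (h : IsPolynomialRelation x s r)
    (hs : s (Fin.last m) = 0) : IsPolynomialRelation x (Fin.init s) r := fun t => by
  simpa [Fin.sum_univ_castSucc, hs, Fin.init] using h t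

theorem eq_zero_of_fin_zero {s : Fin 0 → ℂ[X]} (h : IsPolynomialRelation x s r) : r = 0 :=
  eq_zero_of_forall_eval_ofReal_eq_zero fun t => by simpa using (h t).symm

theorem eq_zero_of_last_eq_zero {n : ℕ} {s : Fin (n + 1) → ℂ[X]}
    (hmin : ∀ m < n, ¬ ∃ (r : ℂ[X]) (s : Fin (m + 1) → ℂ[X]),
      (r ≠ 0 ∨ ∃ ι, s ι ≠ 0) ∧ IsPolynomialRelation x s r)
    (h : IsPolynomialRelation x s r) (hs : s (Fin.last n) = 0) : s = 0 ∧ r = 0 := by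
  cases n with
  | zero =>
    refine ⟨funext fun ι => ?_, (h.init hs).eq_zero_of_fin_zero⟩
    obtain rfl := Subsingleton.elim (α := Fin 1) ι (Fin.last 0)
    exact hs
  | succ m =>
    by_contra hne
    refine hmin m m.lt_succ_self ⟨r, Fin.init s, ?_, h.init hs⟩
    by_contra! hzero
    exact hne ⟨funext (Fin.lastCases hs hzero.2), hzero.1⟩

end IsPolynomialRelation

theorem coefficients_projectively_linearly_identifiable_general
    (x : ℝ → ℂ)
    (n : ℕ) (p : ℂ[X]) (q : Fin (n + 1) → ℂ[X])
    (hqn : q (Fin.last n) ≠ 0)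
    (hcop : ¬ ∃ d : ℂ[X], 0 < d.natDegree ∧ d ∣ p ∧ ∀ ι, d ∣ q ι)
    (heq : ∀ t : ℝ, ∑ ι, (q ι).eval (t : ℂ) * iteratedDeriv (ι : ℕ) x t
      = p.eval (t : ℂ))
    -- minimality: no nonzero relation of order `m < n`
    (hmin : ∀ m : ℕ, m < n →
      ¬ ∃ (r : ℂ[X]) (s : Fin (m + 1) → ℂ[X]),
          (r ≠ 0 ∨ ∃ ι, s ι ≠ 0) ∧
          (∀ t : ℝ, ∑ ι, (s ι).eval (t : ℂ) * iteratedDeriv (ι : ℕ) x t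
            = r.eval (t : ℂ)))
    (c : Fin (n + 1) → ℂ[X]) (d : ℂ[X])
    (hdegc : ∀ ι, (c ι).degree ≤ (q ι).degree)
    (heq' : ∀ t : ℝ, ∑ ι, (c ι).eval (t : ℂ) * iteratedDeriv (ι : ℕ) x t
      = d.eval (t : ℂ)) :
    ∃ lam : ℂ, (∀ ι, c ι = C lam * q ι) ∧ d = C lam * p := by
  set N := Fin.last n
  obtain ⟨lam, hlt⟩ := exists_degree_sub_C_mul_lt hqn (hdegc N)
  set C' := c - C lam • q
  set D' := d - C lam * p
  have hdiff : IsPolynomialRelation x C' D' :=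
    IsPolynomialRelation.sub heq' (IsPolynomialRelation.smul heq (C lam))
  have helim : IsPolynomialRelation x (q N • C' - C' N • q) (q N * D' - C' N * p) :=
    (hdiff.smul (q N)).sub (IsPolynomialRelation.smul heq (C' N))
  obtain ⟨hs, hr⟩ := helim.eq_zero_of_last_eq_zero hmin (sub_eq_zero.mpr (mul_comm _ _))
  have hunit : ∀ e : ℂ[X], (∀ o, e ∣ Option.elim o p q) → IsUnit e := fun e he => by
    by_contra hne
    exact hcop ⟨e, natDegree_pos_of_not_isUnit_of_dvd hqn hne (he (some N)), he none,
      fun ι => he (some ι)⟩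
  have hdvd : q N ∣ C' N := by
    refine dvd_of_forall_mul_eq_mul (g := fun o => Option.elim o D' C') hqn hunit ?_
    rintro (_ | ι)
    · exact sub_eq_zero.mp hr
    · exact sub_eq_zero.mp (congrFun hs ι)
  have hC'N : C' N = 0 := eq_zero_of_dvd_of_degree_lt hdvd hlt
  rw [hC'N, zero_smul, sub_zero] at hs
  rw [hC'N, zero_mul, sub_zero] at hr
  have hC' : C' = 0 := (smul_eq_zero.mp hs).resolve_left hqn
  have hD' : D' = 0 := (mul_eq_zero.mp hr).resolve_left hqn
  exact ⟨lam, fun ι => sub_eq_zero.mp (congrFun hC' ι), sub_eq_zero.mp hD'⟩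

/-- projective linear identifiability of the coefficients of the
minimal equation: any equation with coefficients of no larger degrees is a
constant multiple of the minimal one. -/
theorem coefficients_projectively_linearly_identifiable
    (x : ℝ → ℂ) (hx : AnalyticOnNhd ℝ x Set.univ) (hx0 : x ≠ 0)
    (n : ℕ) (p : ℂ[X]) (q : Fin (n + 1) → ℂ[X])
    (hqn : q (Fin.last n) ≠ 0)
    (hcop : ¬ ∃ d : ℂ[X], 0 < d.natDegree ∧ d ∣ p ∧ ∀ ι, d ∣ q ι)
    (heq : ∀ t : ℝ, ∑ ι, (q ι).eval (t : ℂ) * iteratedDeriv (ι : ℕ) x t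
      = p.eval (t : ℂ))
    -- minimality: no nonzero relation of order `m < n`
    (hmin : ∀ m : ℕ, m < n →
      ¬ ∃ (r : ℂ[X]) (s : Fin (m + 1) → ℂ[X]),
          (r ≠ 0 ∨ ∃ ι, s ι ≠ 0) ∧
          (∀ t : ℝ, ∑ ι, (s ι).eval (t : ℂ) * iteratedDeriv (ι : ℕ) x t
            = r.eval (t : ℂ)))
    (c : Fin (n + 1) → ℂ[X]) (d : ℂ[X])
    (hdegc : ∀ ι, (c ι).degree ≤ (q ι).degree)
    (hdegd : d.degree ≤ p.degree)
    (heq' : ∀ t : ℝ, ∑ ι, (c ι).eval (t : ℂ) * iteratedDeriv (ι : ℕ) x t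
      = d.eval (t : ℂ)) :
    ∃ lam : ℂ, (∀ ι, c ι = C lam * q ι) ∧ d = C lam * p :=
  coefficients_projectively_linearly_identifiable_general x n p q hqn hcop heq hmin c d hdegc heq'
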